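/- Decryption recovers the input state on the chosen signal register: for every ψ with Σ_k |ψ(k)|² = 1 and every l : Fin n, defining the decrypted global state Ψ_out(k, s, t) = Σ_{s'_l, t'} U_dec (s l, t) (s'_l, t') · Ψ_enc(k, s[l := s'_l], t') (U_dec acting on S_l and all noise registers, identity elsewhere), the reduced density matrix of register S_l, with entries ρ u u' = Σ over k, t, and s restricted to s l = u (resp. u'), of Ψ_out(k, s[l := u], t) · conj(Ψ_out(k, s[l := u'], t)), equals the rank-one matrix with entries ψ(u) · conj(ψ(u')). -/

import Mathlib

open Matrix Complex BigOperators
open scoped Kronecker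

noncomputable section

/-- `ω = exp(2πi/d)`, the primitive `d`-th root of unity. -/
def ω (d : ℕ) : ℂ := Complex.exp (2 * Real.pi * Complex.I / d)

/-- `τ = exp(πi(d+1)/d)`, so that `τ² = ω`. -/
def τ (d : ℕ) : ℂ := Complex.exp (Real.pi * Complex.I * (d + 1) / d)

/-- The clock matrix `Z`, diagonal with entries `ω^(j.val)`. -/
def Zmat (d : ℕ) : Matrix (ZMod d) (ZMod d) ℂ :=
  Matrix.diagonal fun j => ω d ^ (j.val)

/-- The shift matrix `X`, with `X j k = 1` iff `j = k + 1` in `ZMod d`. -/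
def Xmat (d : ℕ) : Matrix (ZMod d) (ZMod d) ℂ :=
  Matrix.of fun j k => if j = k + 1 then 1 else 0

lemma omega_ne_zero (d : ℕ) : ω d ≠ 0 := Complex.exp_ne_zero _

/-- The clock matrix as an invertible matrix (a unit of the matrix ring). -/
def Zu (d : ℕ) [NeZero d] : (Matrix (ZMod d) (ZMod d) ℂ)ˣ where
  val := Zmat d
  inv := Matrix.diagonal fun j => (ω d ^ (j.val))⁻¹
  val_inv := by
    rw [Zmat, Matrix.diagonal_mul_diagonal]
    have h : (fun j : ZMod d => ω d ^ j.val * (ω d ^ j.val)⁻¹) = fun _ => 1 := by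
      funext j; exact mul_inv_cancel₀ (pow_ne_zero _ (omega_ne_zero d))
    rw [h, Matrix.diagonal_one]
  inv_val := by
    rw [Zmat, Matrix.diagonal_mul_diagonal]
    have h : (fun j : ZMod d => (ω d ^ j.val)⁻¹ * ω d ^ j.val) = fun _ => 1 := by
      funext j; exact inv_mul_cancel₀ (pow_ne_zero _ (omega_ne_zero d))
    rw [h, Matrix.diagonal_one]

lemma Xmat_mul_transpose (d : ℕ) [NeZero d] : Xmat d * (Xmat d)ᵀ = 1 := by
  ext i j
  simp only [Matrix.mul_apply, Matrix.transpose_apply, Xmat, Matrix.of_apply,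
    Matrix.one_apply, ite_mul, one_mul, zero_mul]
  have h : ∀ m : ZMod d,
      (if i = m + 1 then (if j = m + 1 then (1:ℂ) else 0) else 0)
        = (if m = i - 1 then (if j = m + 1 then (1:ℂ) else 0) else 0) := by
    intro m
    by_cases hm : i = m + 1
    · have hm' : m = i - 1 := by rw [hm]; ring
      rw [if_pos hm, if_pos hm']
    · have hm' : ¬ m = i - 1 := fun h' => hm (by rw [h']; ring)
      rw [if_neg hm, if_neg hm']
  rw [Finset.sum_congr rfl fun m _ => h m, Finset.sum_ite_eq' Finset.univ (i - 1)]
  simp only [Finset.mem_univ, if_true, sub_add_cancel]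
  by_cases hij : i = j
  · subst hij; simp
  · rw [if_neg (fun h' => hij h'.symm), if_neg hij]

/-- The shift matrix as an invertible matrix (a unit of the matrix ring). -/
def Xu (d : ℕ) [NeZero d] : (Matrix (ZMod d) (ZMod d) ℂ)ˣ :=
  ⟨Xmat d, (Xmat d)ᵀ, Xmat_mul_transpose d,
    by first
      | exact mul_eq_one_comm.mp (Xmat_mul_transpose d)
      | exact Matrix.mul_eq_one_comm_of_equiv (Equiv.refl _) |>.mp (Xmat_mul_transpose d)⟩

/-- The Weyl–Heisenberg displacement operator `W(a,b) = τ^(ab) • X^a * Z^b`,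
where `X^a`, `Z^b` are integer (`zpow`) powers of the invertible matrices `X`, `Z`. -/
def Wop (d : ℕ) [NeZero d] (a b : ℤ) : Matrix (ZMod d) (ZMod d) ℂ :=
  τ d ^ (a * b) •
    (((Xu d ^ a : (Matrix (ZMod d) (ZMod d) ℂ)ˣ) : Matrix (ZMod d) (ZMod d) ℂ) *
      ((Zu d ^ b : (Matrix (ZMod d) (ZMod d) ℂ)ˣ) : Matrix (ZMod d) (ZMod d) ℂ))

/-- The maximally entangled vector `Φ(j,k) = 1/√d` if `j = k`, else `0`. -/
def MES (d : ℕ) : ZMod d × ZMod d → ℂ :=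
  fun p => if p.1 = p.2 then ((1 / Real.sqrt d : ℝ) : ℂ) else 0

/-- The generalized Bell vector `B(a,b)(s,t) = ω^(−b·t.val)/√d` if `s = t − a`, else `0`. -/
def Bell (d : ℕ) (a b : ℤ) : ZMod d × ZMod d → ℂ :=
  fun p => if p.1 = p.2 - (a : ZMod d)
    then ω d ^ (-(b * (p.2.val : ℤ))) / ((Real.sqrt d : ℝ) : ℂ) else 0

/-- The phase `φ(a,b) = τ^(−(a² + b² − (n+1)·a·b))`. -/
def φcoef (d n : ℕ) (a b : ℤ) : ℂ :=
  τ d ^ (-(a ^ 2 + b ^ 2 - ((n : ℤ) + 1) * a * b))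

/-- The encryption operator `U_enc`. -/
def Uenc (d n : ℕ) [NeZero d] :
    Matrix (ZMod d × (Fin n → ZMod d)) (ZMod d × (Fin n → ZMod d)) ℂ :=
  Matrix.of fun p q => (1 / (d : ℂ)) *
    ∑ a ∈ Finset.range d, ∑ b ∈ Finset.range d,
      (φcoef d n a b)⁻¹ * Wop d a b p.1 q.1 *
        ∏ i, (Wop d a b)ᴴ (p.2 i) (q.2 i)

/-- The decryption operator `U_dec` for decrypting the `l`-th signal qudit. -/
def Udec (d n : ℕ) [NeZero d] (l : Fin n) :
    Matrix (ZMod d × (Fin n → ZMod d)) (ZMod d × (Fin n → ZMod d)) ℂ :=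
  Matrix.of fun p q =>
    ∑ a ∈ Finset.range d, ∑ b ∈ Finset.range d,
      φcoef d n a b * Bell d a b (p.1, p.2 l) *
        (starRingEnd ℂ) (Bell d a b (q.1, q.2 l)) *
        ∏ i ∈ Finset.univ.erase l, (Wop d a b)ᵀ (p.2 i) (q.2 i)

/-- The initial global state `Ψ₀(k,s,t) = ψ(k)·d^(−n/2)` if `s = t`, else `0`. -/
def Ψinit (d n : ℕ) (ψ : ZMod d → ℂ) :
    ZMod d × (Fin n → ZMod d) × (Fin n → ZMod d) → ℂ :=
  fun p => if p.2.1 = p.2.2 then ψ p.1 * (((d : ℝ) ^ (-(n : ℝ) / 2) : ℝ) : ℂ) else 0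

/-- The encrypted global state `Ψ_enc = U_enc Ψ₀` (U_enc acting on A and the signals). -/
def Ψenc (d n : ℕ) [NeZero d] (ψ : ZMod d → ℂ) :
    ZMod d × (Fin n → ZMod d) × (Fin n → ZMod d) → ℂ :=
  fun p => ∑ k' : ZMod d, ∑ s' : Fin n → ZMod d,
    Uenc d n (p.1, p.2.1) (k', s') * Ψinit d n ψ (k', s', p.2.2)

/-- Assemble a function `Fin n → α` from a value `u` at index `i₀` and values `g`
on the remaining indices. -/
def insVal {α : Type*} {n : ℕ} (i₀ : Fin n) (u : α) (g : {i : Fin n // i ≠ i₀} → α) :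
    Fin n → α :=
  fun i => if h : i = i₀ then u else g ⟨i, h⟩


/-- The decrypted global state `Ψ_out`, where `U_dec` acts on the signal register
`S_l` and all noise registers, and as the identity elsewhere. -/
def Ψout (d n : ℕ) [NeZero d] (ψ : ZMod d → ℂ) (l : Fin n) :
    ZMod d × (Fin n → ZMod d) × (Fin n → ZMod d) → ℂ :=
  fun p => ∑ v : ZMod d, ∑ t' : Fin n → ZMod d,
    Udec d n l (p.2.1 l, p.2.2) (v, t') *
      Ψenc d n ψ (p.1, Function.update p.2.1 l v, t')

set_option linter.unusedSectionVars false

lemma tau_ne_zero (d : ℕ) : τ d ≠ 0 := Complex.exp_ne_zero _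

variable (d : ℕ) [NeZero d]


lemma dC_ne_zero : (d : ℂ) ≠ 0 := Nat.cast_ne_zero.mpr (NeZero.ne d)

lemma omega_pow_d : ω d ^ d = 1 := by
  rw [ω, ← Complex.exp_nat_mul]
  have : (d : ℂ) * (2 * Real.pi * Complex.I / d) = 2 * Real.pi * Complex.I := by
    rw [mul_div_assoc', mul_div_cancel_left₀ _ (dC_ne_zero d)]
  rw [this, Complex.exp_two_pi_mul_I]

lemma tau_sq : τ d ^ 2 = ω d := by
  rw [τ, ω, sq, ← Complex.exp_add]
  rw [show Real.pi * Complex.I * (d + 1) / d + Real.pi * Complex.I * (d + 1) / d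
      = 2 * Real.pi * Complex.I / d + 2 * Real.pi * Complex.I by
    have hd : (d:ℂ) ≠ 0 := dC_ne_zero d
    field_simp; ring]
  rw [Complex.exp_add, Complex.exp_two_pi_mul_I, mul_one]

lemma star_tau : (starRingEnd ℂ) (τ d) = (τ d)⁻¹ := by
  rw [τ, ← Complex.exp_conj, ← Complex.exp_neg]
  congr 1
  simp only [map_div₀, _root_.map_mul, Complex.conj_I, Complex.conj_ofReal, map_add,
    _root_.map_one, Complex.conj_natCast]
  ring

lemma star_omega : (starRingEnd ℂ) (ω d) = (ω d)⁻¹ := by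
  rw [ω, ← Complex.exp_conj, ← Complex.exp_neg]
  congr 1
  simp only [map_div₀, _root_.map_mul, Complex.conj_I, Complex.conj_ofReal, map_ofNat,
    Complex.conj_natCast]
  ring

lemma star_tau_zpow (m : ℤ) : (starRingEnd ℂ) (τ d ^ m) = τ d ^ (-m) := by
  rw [map_zpow₀, star_tau, _root_.inv_zpow, ← _root_.zpow_neg]

lemma star_tau_zpow' (m : ℤ) : star (τ d ^ m) = τ d ^ (-m) := star_tau_zpow d m



lemma star_omega_zpow (m : ℤ) : (starRingEnd ℂ) (ω d ^ m) = ω d ^ (-m) := by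
  rw [map_zpow₀, star_omega, _root_.inv_zpow, ← _root_.zpow_neg]

lemma star_omega_zpow' (m : ℤ) : star (ω d ^ m) = ω d ^ (-m) := star_omega_zpow d m


lemma omega_zpow_d : ω d ^ (d : ℤ) = 1 := by
  rw [zpow_natCast, omega_pow_d]

lemma omega_zpow_congr {m m' : ℤ} (h : (m : ZMod d) = (m' : ZMod d)) :
    ω d ^ m = ω d ^ m' := by
  have hdvd : (d : ℤ) ∣ m - m' := by
    rwa [← ZMod.intCast_zmod_eq_zero_iff_dvd, Int.cast_sub, sub_eq_zero]
  obtain ⟨c, hc⟩ := hdvd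
  have : m = m' + d * c := by linarith
  rw [this, zpow_add₀ (omega_ne_zero d), _root_.zpow_mul, omega_zpow_d, _root_.one_zpow, mul_one]

lemma omega_zpow_natCast_val (x : ZMod d) : ω d ^ ((x.val : ℤ)) = ω d ^ (x.val) := zpow_natCast _ _

lemma sum_omega_zpow (m : ℤ) :
    ∑ b ∈ Finset.range d, ω d ^ ((b : ℤ) * m) = if (m : ZMod d) = 0 then (d : ℂ) else 0 := by
  have hprim : IsPrimitiveRoot (ω d) d := Complex.isPrimitiveRoot_exp d (NeZero.ne d)
  have hrw : ∀ b ∈ Finset.range d, ω d ^ ((b : ℤ) * m) = (ω d ^ m) ^ b := by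
    intro b _
    rw [mul_comm, _root_.zpow_mul, zpow_natCast]
  rw [Finset.sum_congr rfl hrw]
  by_cases h : (m : ZMod d) = 0
  · rw [if_pos h]
    have : ω d ^ m = 1 := by
      have := omega_zpow_congr d (m' := 0) (by simpa using h)
      simpa using this
    simp [this]
  · have hne : ω d ^ m ≠ 1 := by
      intro hone
      exact h ((ZMod.intCast_zmod_eq_zero_iff_dvd m d).mpr
        ((hprim.zpow_eq_one_iff_dvd m).mp hone))
    rw [geom_sum_eq hne, if_neg h]
    have : (ω d ^ m) ^ d = 1 := by
      rw [← zpow_natCast, ← _root_.zpow_mul, mul_comm, _root_.zpow_mul, omega_zpow_d, _root_.one_zpow]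
    rw [this, sub_self, zero_div]

lemma sum_zmod (f : ZMod d → ℂ) : ∑ x : ZMod d, f x = ∑ i ∈ Finset.range d, f i := by
  refine Finset.sum_nbij' (fun x => x.val) (fun i => (i : ZMod d))
    (fun x _ => Finset.mem_range.mpr (ZMod.val_lt x)) (fun i _ => Finset.mem_univ _)
    (fun x _ => ZMod.natCast_rightInverse x)
    (fun i hi => ZMod.val_cast_of_lt (Finset.mem_range.mp hi))
    (fun x _ => by rw [ZMod.natCast_rightInverse x])

lemma sum_range_pick (c : ZMod d) (f : ℕ → ℂ) :
    ∑ a ∈ Finset.range d, (if ((a : ℕ) : ZMod d) = c then f a else 0) = f c.val := by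
  rw [Finset.sum_eq_single c.val]
  · rw [if_pos (ZMod.natCast_rightInverse c)]
  · intro a ha hne
    rw [if_neg]
    intro h
    exact hne (by rw [← ZMod.val_cast_of_lt (Finset.mem_range.mp ha), h])
  · intro h
    exact absurd (Finset.mem_range.mpr (ZMod.val_lt c)) h


lemma zpow_sum_eq {α : Type*} (x : ℂ) (hx : x ≠ 0) (s : Finset α) (f : α → ℤ) :
    x ^ (∑ i ∈ s, f i) = ∏ i ∈ s, x ^ f i := by
  classical
  induction s using Finset.cons_induction with
  | empty => simp
  | cons a s ha ih =>
    rw [Finset.sum_cons, Finset.prod_cons, zpow_add₀ hx, ih]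

/-- Shift matrix by `c`. -/
def Pmat (c : ZMod d) : Matrix (ZMod d) (ZMod d) ℂ :=
  Matrix.of fun j k => if j = k + c then 1 else 0

lemma Pmat_mul (c1 c2 : ZMod d) : Pmat d c1 * Pmat d c2 = Pmat d (c1 + c2) := by
  ext j k
  rw [Matrix.mul_apply, Finset.sum_eq_single (k + c2)]
  · show (if j = (k + c2) + c1 then (1:ℂ) else 0) * (if (k + c2 : ZMod d) = k + c2 then 1 else 0)
      = (if j = k + (c1 + c2) then (1:ℂ) else 0)
    rw [if_pos rfl, mul_one, show k + c2 + c1 = k + (c1 + c2) by ring]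
  · intro m _ hm
    show (if j = m + c1 then (1:ℂ) else 0) * (if m = k + c2 then 1 else 0) = 0
    rw [if_neg hm, mul_zero]
  · intro h; exact absurd (Finset.mem_univ _) h

lemma Pmat_zero : Pmat d 0 = 1 := by
  ext j k
  show (if j = k + 0 then (1:ℂ) else 0) = _
  rw [add_zero]
  by_cases h : j = k
  · rw [if_pos h, h, Matrix.one_apply_eq]
  · rw [if_neg h, Matrix.one_apply_ne h]

lemma Xu_val : ((Xu d : (Matrix (ZMod d) (ZMod d) ℂ)ˣ) : Matrix (ZMod d) (ZMod d) ℂ)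
    = Pmat d 1 := rfl

lemma Xu_inv_val : (((Xu d)⁻¹ : (Matrix (ZMod d) (ZMod d) ℂ)ˣ) : Matrix (ZMod d) (ZMod d) ℂ)
    = Pmat d (-1) := by
  show (Xmat d)ᵀ = Pmat d (-1)
  ext j k
  show (if k = j + 1 then (1:ℂ) else 0) = if j = k + (-1) then 1 else 0
  by_cases h : k = j + 1
  · rw [if_pos h, if_pos (by rw [h]; ring)]
  · rw [if_neg h, if_neg (fun h' => h (by rw [h']; ring))]

lemma Xu_zpow (a : ℤ) : ((Xu d ^ a : (Matrix (ZMod d) (ZMod d) ℂ)ˣ) : Matrix (ZMod d) (ZMod d) ℂ)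
    = Pmat d (a : ZMod d) := by
  induction a using Int.induction_on with
  | zero => rw [zpow_zero, Units.val_one]; rw [show ((0:ℤ) : ZMod d) = 0 by push_cast; rfl, Pmat_zero]
  | succ i ih =>
    rw [_root_.zpow_add_one, Units.val_mul, ih, Xu_val, Pmat_mul]
    congr 1; push_cast; ring
  | pred i ih =>
    rw [_root_.zpow_sub_one, Units.val_mul, ih, Xu_inv_val, Pmat_mul]
    congr 1; push_cast; ring

/-- Clock matrix powers. -/
def Qmat (b : ℤ) : Matrix (ZMod d) (ZMod d) ℂ :=
  Matrix.diagonal fun j => ω d ^ ((j.val : ℤ) * b)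

lemma Qmat_mul (b1 b2 : ℤ) : Qmat d b1 * Qmat d b2 = Qmat d (b1 + b2) := by
  rw [Qmat, Qmat, Qmat, Matrix.diagonal_mul_diagonal]
  exact congrArg Matrix.diagonal (funext fun j => by
    rw [← zpow_add₀ (omega_ne_zero d), mul_add])

lemma Qmat_zero : Qmat d 0 = 1 := by
  rw [Qmat]
  have : (fun j : ZMod d => ω d ^ ((j.val : ℤ) * 0)) = fun _ => 1 := by
    funext j; rw [mul_zero, zpow_zero]
  rw [this, Matrix.diagonal_one]

lemma Zu_val : ((Zu d : (Matrix (ZMod d) (ZMod d) ℂ)ˣ) : Matrix (ZMod d) (ZMod d) ℂ)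
    = Qmat d 1 := by
  show Zmat d = Qmat d 1
  rw [Zmat, Qmat]
  exact congrArg Matrix.diagonal (funext fun j => by rw [mul_one, zpow_natCast])

lemma Zu_inv_val : (((Zu d)⁻¹ : (Matrix (ZMod d) (ZMod d) ℂ)ˣ) : Matrix (ZMod d) (ZMod d) ℂ)
    = Qmat d (-1) := by
  show Matrix.diagonal _ = Qmat d (-1)
  rw [Qmat]
  exact congrArg Matrix.diagonal (funext fun j => by
    rw [mul_neg, mul_one, _root_.zpow_neg, zpow_natCast])

lemma Zu_zpow (b : ℤ) : ((Zu d ^ b : (Matrix (ZMod d) (ZMod d) ℂ)ˣ) : Matrix (ZMod d) (ZMod d) ℂ)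
    = Qmat d b := by
  induction b using Int.induction_on with
  | zero => rw [zpow_zero, Units.val_one, Qmat_zero]
  | succ i ih => rw [_root_.zpow_add_one, Units.val_mul, ih, Zu_val, Qmat_mul]
  | pred i ih =>
    rw [_root_.zpow_sub_one, Units.val_mul, ih, Zu_inv_val, Qmat_mul,
      show (-(i:ℤ) + -1) = -(i:ℤ) - 1 by ring]

lemma Wop_apply (a b : ℤ) (j k : ZMod d) :
    Wop d a b j k = if j = k + (a : ZMod d) then τ d ^ (a * b) * ω d ^ ((k.val : ℤ) * b) else 0 := by
  rw [Wop, Xu_zpow, Zu_zpow, Qmat, Matrix.smul_apply, Matrix.mul_diagonal, smul_eq_mul]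
  show τ d ^ (a * b) * ((if j = k + (a : ZMod d) then (1:ℂ) else 0) * ω d ^ ((k.val : ℤ) * b)) = _
  by_cases h : j = k + (a : ZMod d)
  · rw [if_pos h, if_pos h, one_mul]
  · rw [if_neg h, if_neg h, zero_mul, mul_zero]

lemma WopH_apply (a b : ℤ) (p q : ZMod d) :
    (Wop d a b)ᴴ p q
      = if q = p + (a : ZMod d) then τ d ^ (-(a * b)) * ω d ^ (-((p.val : ℤ) * b)) else 0 := by
  rw [Matrix.conjTranspose_apply, Wop_apply]
  by_cases h : q = p + (a : ZMod d)
  · rw [if_pos h, if_pos h, star_mul', star_tau_zpow', star_omega_zpow']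
  · rw [if_neg h, if_neg h, star_zero]

lemma WopT_apply (a b : ℤ) (p q : ZMod d) :
    (Wop d a b)ᵀ p q
      = if q = p + (a : ZMod d) then τ d ^ (a * b) * ω d ^ ((p.val : ℤ) * b) else 0 := by
  rw [Matrix.transpose_apply, Wop_apply]

lemma sqrtd_ne_zero : ((Real.sqrt d : ℝ) : ℂ) ≠ 0 := by
  rw [Ne, Complex.ofReal_eq_zero]
  have hd : (0:ℝ) < d := by exact_mod_cast Nat.pos_of_ne_zero (NeZero.ne d)
  exact Real.sqrt_ne_zero'.mpr hd

lemma star_Bell (a b : ℤ) (p q : ZMod d) :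
    (starRingEnd ℂ) (Bell d a b (p, q))
      = if p = q - (a : ZMod d) then ω d ^ (b * (q.val : ℤ)) / ((Real.sqrt d : ℝ) : ℂ) else 0 := by
  rw [Bell]
  by_cases h : p = q - (a : ZMod d)
  · rw [if_pos h, if_pos h, map_div₀, star_omega_zpow, Complex.conj_ofReal, neg_neg]
  · rw [if_neg h, if_neg h, map_zero]
lemma prod_WopH (n : ℕ) (a b : ℤ) (s t : Fin n → ZMod d) :
    ∏ i, (Wop d a b)ᴴ (s i) (t i)
      = if ∀ i, t i = s i + (a : ZMod d) then
          τ d ^ (-((n:ℤ) * (a * b))) * ∏ i, ω d ^ (-(((s i).val : ℤ) * b))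
        else 0 := by
  simp only [WopH_apply]
  rw [Finset.prod_ite_zero]
  simp only [Finset.mem_univ, true_implies]
  by_cases h : ∀ i, t i = s i + (a : ZMod d)
  · rw [if_pos h, if_pos h, Finset.prod_mul_distrib, Finset.prod_const, Finset.card_univ,
      Fintype.card_fin, ← zpow_natCast, ← _root_.zpow_mul]
    congr 2
    ring
  · rw [if_neg h, if_neg h]

/-- Summand of the closed form of `Ψenc`. -/
def encA (d n : ℕ) [NeZero d] (ψ : ZMod d → ℂ) (k : ZMod d) (s : Fin n → ZMod d)
    (a b : ℕ) : ℂ :=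
  (φcoef d n a b)⁻¹ * (τ d ^ ((a:ℤ) * (b:ℤ)) * ω d ^ (((k - ((a:ℕ):ZMod d)).val : ℤ) * (b:ℤ))) *
    (τ d ^ (-((n:ℤ) * ((a:ℤ) * (b:ℤ)))) * ∏ i, ω d ^ (-(((s i).val : ℤ) * (b:ℤ)))) *
    ψ (k - ((a:ℕ) : ZMod d))

lemma Psienc_apply (n : ℕ) (ψ : ZMod d → ℂ) (k : ZMod d) (s t : Fin n → ZMod d) :
    Ψenc d n ψ (k, s, t)
      = (((d:ℝ) ^ (-(n:ℝ)/2) : ℝ) : ℂ) / d *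
        ∑ a ∈ Finset.range d, ∑ b ∈ Finset.range d,
          (if ∀ i, t i = s i + ((a:ℕ) : ZMod d) then encA d n ψ k s a b else 0) := by
  set Dc : ℂ := (((d:ℝ) ^ (-(n:ℝ)/2) : ℝ) : ℂ) with hDc
  have hsum1 : Ψenc d n ψ (k, s, t)
      = ∑ k' : ZMod d, Uenc d n (k, s) (k', t) * (ψ k' * Dc) := by
    rw [Ψenc]
    apply Finset.sum_congr rfl
    intro k' _
    rw [Finset.sum_eq_single t]
    · show Uenc d n (k,s) (k', t) * (if t = t then ψ k' * Dc else 0) = _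
      rw [if_pos rfl]
    · intro s' _ hs'
      show Uenc d n (k,s) (k', s') * (if s' = t then ψ k' * Dc else 0) = 0
      rw [if_neg hs', mul_zero]
    · intro h; exact absurd (Finset.mem_univ _) h
  rw [hsum1]
  have hterm : ∀ a ∈ Finset.range d, ∀ b ∈ Finset.range d, ∀ k' : ZMod d,
      ((φcoef d n a b)⁻¹ * Wop d a b k k' * ∏ i, (Wop d a b)ᴴ (s i) (t i)) * (ψ k' * Dc)
        = if k' = k - ((a:ℕ) : ZMod d) then
            (if ∀ i, t i = s i + ((a:ℕ) : ZMod d) then encA d n ψ k s a b * Dc else 0)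
          else 0 := by
    intro a _ b _ k'
    rw [Wop_apply, prod_WopH]
    simp only [Int.cast_natCast]
    by_cases hk' : k' = k - ((a:ℕ) : ZMod d)
    · rw [if_pos hk', if_pos (show k = k' + ((a:ℕ):ZMod d) by rw [hk']; ring)]
      by_cases hC : ∀ i, t i = s i + ((a:ℕ) : ZMod d)
      · rw [if_pos hC, if_pos hC, encA, hk']
        ring
      · rw [if_neg hC, if_neg hC, mul_zero, zero_mul]
    · rw [if_neg hk', if_neg (fun h => hk' (by rw [h]; ring)), mul_zero, zero_mul, zero_mul]
  have hU : ∀ k' : ZMod d, Uenc d n (k, s) (k', t) * (ψ k' * Dc)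
      = (1/(d:ℂ)) * ∑ a ∈ Finset.range d, ∑ b ∈ Finset.range d,
          ((φcoef d n a b)⁻¹ * Wop d a b k k' * ∏ i, (Wop d a b)ᴴ (s i) (t i)) * (ψ k' * Dc) := by
    intro k'
    show (1 / (d:ℂ) * ∑ a ∈ Finset.range d, ∑ b ∈ Finset.range d,
        (φcoef d n a b)⁻¹ * Wop d a b k k' * ∏ i, (Wop d a b)ᴴ (s i) (t i)) * (ψ k' * Dc) = _
    rw [mul_assoc, Finset.sum_mul]
    congr 1
    apply Finset.sum_congr rfl
    intro a _
    rw [Finset.sum_mul]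
  calc ∑ k' : ZMod d, Uenc d n (k, s) (k', t) * (ψ k' * Dc)
      = ∑ k' : ZMod d, (1/(d:ℂ)) * ∑ a ∈ Finset.range d, ∑ b ∈ Finset.range d,
          ((φcoef d n a b)⁻¹ * Wop d a b k k' * ∏ i, (Wop d a b)ᴴ (s i) (t i)) * (ψ k' * Dc) :=
        Finset.sum_congr rfl (fun k' _ => hU k')
    _ = (1/(d:ℂ)) * ∑ k' : ZMod d, ∑ a ∈ Finset.range d, ∑ b ∈ Finset.range d,
          ((φcoef d n a b)⁻¹ * Wop d a b k k' * ∏ i, (Wop d a b)ᴴ (s i) (t i)) * (ψ k' * Dc) := by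
        rw [Finset.mul_sum]
    _ = (1/(d:ℂ)) * ∑ a ∈ Finset.range d, ∑ b ∈ Finset.range d, ∑ k' : ZMod d,
          ((φcoef d n a b)⁻¹ * Wop d a b k k' * ∏ i, (Wop d a b)ᴴ (s i) (t i)) * (ψ k' * Dc) := by
        rw [Finset.sum_comm]
        congr 1
        exact Finset.sum_congr rfl (fun a _ => Finset.sum_comm)
    _ = (1/(d:ℂ)) * ∑ a ∈ Finset.range d, ∑ b ∈ Finset.range d,
          (if ∀ i, t i = s i + ((a:ℕ) : ZMod d) then encA d n ψ k s a b * Dc else 0) := by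
        congr 1
        apply Finset.sum_congr rfl; intro a ha
        apply Finset.sum_congr rfl; intro b hb
        rw [Finset.sum_congr rfl (fun k' _ => hterm a ha b hb k'),
          Finset.sum_ite_eq' Finset.univ (k - ((a:ℕ):ZMod d))]
        rw [if_pos (Finset.mem_univ _)]
    _ = Dc / d * ∑ a ∈ Finset.range d, ∑ b ∈ Finset.range d,
          (if ∀ i, t i = s i + ((a:ℕ) : ZMod d) then encA d n ψ k s a b else 0) := by
        have hrow : ∀ a ∈ Finset.range d,
            (∑ b ∈ Finset.range d,
              (if ∀ i, t i = s i + ((a:ℕ):ZMod d) then encA d n ψ k s a b * Dc else 0))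
            = (∑ b ∈ Finset.range d,
              (if ∀ i, t i = s i + ((a:ℕ):ZMod d) then encA d n ψ k s a b else 0)) * Dc := by
          intro a _
          rw [Finset.sum_mul]
          exact Finset.sum_congr rfl fun b _ => by rw [ite_mul, zero_mul]
        rw [Finset.sum_congr rfl hrow, ← Finset.sum_mul]
        ring
lemma sqrtd_mul_self : ((Real.sqrt d : ℝ) : ℂ) * ((Real.sqrt d : ℝ) : ℂ) = (d : ℂ) := by
  rw [← Complex.ofReal_mul, Real.mul_self_sqrt (Nat.cast_nonneg d)]
  norm_cast

lemma sum_if_const {β : Type*} (s : Finset β) (P : Prop) [Decidable P] (f : β → ℂ) :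
    ∑ x ∈ s, (if P then f x else 0) = if P then ∑ x ∈ s, f x else 0 := by
  by_cases h : P <;> simp [h]

lemma sum_range_pick' {a' : ℕ} (ha' : a' < d) (f : ℕ → ℂ) :
    ∑ a ∈ Finset.range d, (if ((a : ℕ) : ZMod d) = ((a' : ℕ) : ZMod d) then f a else 0)
      = f a' := by
  rw [sum_range_pick d _ f, ZMod.val_cast_of_lt ha']

lemma sum_zmod_omega (m : ℤ) :
    ∑ x : ZMod d, ω d ^ ((x.val : ℤ) * m) = if (m : ZMod d) = 0 then (d : ℂ) else 0 := by
  rw [sum_zmod]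
  rw [Finset.sum_congr rfl (fun i hi => by rw [ZMod.val_cast_of_lt (Finset.mem_range.mp hi)])]
  exact sum_omega_zpow d m

lemma piSplit_symm_ne {n : ℕ} (l : Fin n) (x : ZMod d) (g : {j : Fin n // j ≠ l} → ZMod d)
    {j : Fin n} (hj : j ≠ l) :
    (Equiv.piSplitAt l (fun _ => ZMod d)).symm (x, g) j = g ⟨j, hj⟩ := by
  simp [Equiv.piSplitAt, dif_neg hj]

lemma piSplit_symm_at {n : ℕ} (l : Fin n) (x : ZMod d) (g : {j : Fin n // j ≠ l} → ZMod d) :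
    (Equiv.piSplitAt l (fun _ => ZMod d)).symm (x, g) l = x := by
  simp [Equiv.piSplitAt]

lemma sum_pi_split {n : ℕ} (l : Fin n) (h : Fin n → ZMod d) (F : (Fin n → ZMod d) → ℂ)
    (hF : ∀ t' : Fin n → ZMod d, (∃ i, i ≠ l ∧ t' i ≠ h i) → F t' = 0) :
    ∑ t' : Fin n → ZMod d, F t' = ∑ x : ZMod d, F (Function.update h l x) := by
  classical
  rw [← Equiv.sum_comp (Equiv.piSplitAt l (fun _ => ZMod d)).symm F, Fintype.sum_prod_type]
  apply Finset.sum_congr rfl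
  intro x _
  rw [Finset.sum_eq_single (fun j : {j : Fin n // j ≠ l} => h j)]
  · exact congrArg F (funext fun j => by
      by_cases hj : j = l
      · subst hj; rw [piSplit_symm_at, Function.update_self]
      · rw [piSplit_symm_ne d l x _ hj, Function.update_of_ne hj])
  · intro g _ hg
    apply hF
    have hex : ∃ j : {j : Fin n // j ≠ l}, g j ≠ h j := by
      by_contra hc
      push_neg at hc
      exact hg (funext fun j => hc j)
    obtain ⟨j, hjne⟩ := hex
    exact ⟨j, j.2, by rw [piSplit_symm_ne d l x g j.2]; exact hjne⟩
  · intro hmem; exact absurd (Finset.mem_univ _) hmem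

lemma prod_WopT (n : ℕ) (hn : 0 < n) (l : Fin n) (a b : ℤ) (t t' : Fin n → ZMod d) :
    ∏ i ∈ Finset.univ.erase l, (Wop d a b)ᵀ (t i) (t' i)
      = if ∀ i ∈ Finset.univ.erase l, t' i = t i + (a : ZMod d) then
          τ d ^ (((n:ℤ) - 1) * (a * b)) * ∏ i ∈ Finset.univ.erase l, ω d ^ (((t i).val : ℤ) * b)
        else 0 := by
  simp only [WopT_apply]
  rw [Finset.prod_ite_zero]
  by_cases h : ∀ i ∈ Finset.univ.erase l, t' i = t i + (a : ZMod d)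
  · rw [if_pos h, if_pos h, Finset.prod_mul_distrib, Finset.prod_const,
      Finset.card_erase_of_mem (Finset.mem_univ l), Finset.card_univ, Fintype.card_fin,
      ← zpow_natCast, ← _root_.zpow_mul,
      show (a*b) * ((n-1 : ℕ) : ℤ) = ((n:ℤ)-1)*(a*b) by rw [Nat.cast_sub hn]; push_cast; ring]
  · rw [if_neg h, if_neg h]

lemma Udec_apply (n : ℕ) (hn : 0 < n) (l : Fin n) (p1 v : ZMod d) (t t' : Fin n → ZMod d) :
    Udec d n l (p1, t) (v, t')
      = ∑ a' ∈ Finset.range d, ∑ b' ∈ Finset.range d,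
          if ((a' : ℕ) : ZMod d) = t l - p1 ∧ v = t' l - ((a' : ℕ) : ZMod d) ∧
              (∀ i, i ≠ l → t' i = t i + ((a' : ℕ) : ZMod d)) then
            φcoef d n a' b' * τ d ^ (((n:ℤ) - 1) * ((a' : ℤ) * (b' : ℤ))) * (1/(d:ℂ)) *
              ω d ^ (-((b' : ℤ) * ((t l).val : ℤ))) * ω d ^ ((b' : ℤ) * ((t' l).val : ℤ)) *
              ∏ i ∈ Finset.univ.erase l, ω d ^ (((t i).val : ℤ) * (b' : ℤ))
          else 0 := by
  rw [Udec]
  show (∑ a' ∈ Finset.range d, ∑ b' ∈ Finset.range d, _) = _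
  apply Finset.sum_congr rfl; intro a' _
  apply Finset.sum_congr rfl; intro b' _
  rw [Bell, star_Bell, prod_WopT d n hn l]
  simp only [Int.cast_natCast]
  by_cases h1 : p1 = t l - ((a' : ℕ) : ZMod d)
  · by_cases h2 : v = t' l - ((a' : ℕ) : ZMod d)
    · by_cases h3 : ∀ i ∈ Finset.univ.erase l, t' i = t i + ((a' : ℕ) : ZMod d)
      · rw [if_pos h1, if_pos h2, if_pos h3,
          if_pos ⟨by rw [h1]; ring, h2, fun i hi => h3 i (Finset.mem_erase.mpr ⟨hi, Finset.mem_univ i⟩)⟩]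
        have hinv : (1/(d:ℂ)) = ((Real.sqrt d : ℝ) : ℂ)⁻¹ * ((Real.sqrt d : ℝ) : ℂ)⁻¹ := by
          rw [← mul_inv, sqrtd_mul_self, one_div]
        rw [div_eq_mul_inv, div_eq_mul_inv, hinv]
        ring
      · rw [if_neg h3, mul_zero,
          if_neg (fun hc => h3 (fun i hi => hc.2.2 i (Finset.mem_erase.mp hi).1))]
    · rw [if_neg h2, mul_zero, zero_mul, if_neg (fun hc => h2 hc.2.1)]
  · rw [if_neg h1, mul_zero, zero_mul, zero_mul, if_neg (fun hc => h1 (by rw [hc.1]; ring))]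
lemma φcoef_ne_zero (n : ℕ) (a b : ℤ) : φcoef d n a b ≠ 0 := zpow_ne_zero _ (tau_ne_zero d)

lemma sum_reorder {M : Type*} [AddCommMonoid M] {α β : Type*} [Fintype α] [Fintype β]
    (R : Finset ℕ) (f : ℕ → ℕ → ℕ → ℕ → α → β → M) :
    (∑ v : α, ∑ w : β, ∑ a' ∈ R, ∑ a ∈ R, ∑ b' ∈ R, ∑ b ∈ R, f a' a b' b v w)
      = ∑ a' ∈ R, ∑ b' ∈ R, ∑ a ∈ R, ∑ b ∈ R, ∑ w : β, ∑ v : α, f a' a b' b v w := by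
  calc (∑ v : α, ∑ w : β, ∑ a' ∈ R, ∑ a ∈ R, ∑ b' ∈ R, ∑ b ∈ R, f a' a b' b v w)
      = ∑ w : β, ∑ v : α, ∑ a' ∈ R, ∑ a ∈ R, ∑ b' ∈ R, ∑ b ∈ R, f a' a b' b v w :=
        Finset.sum_comm
    _ = ∑ w : β, ∑ a' ∈ R, ∑ v : α, ∑ a ∈ R, ∑ b' ∈ R, ∑ b ∈ R, f a' a b' b v w :=
        Finset.sum_congr rfl fun w _ => Finset.sum_comm
    _ = ∑ w : β, ∑ a' ∈ R, ∑ a ∈ R, ∑ v : α, ∑ b' ∈ R, ∑ b ∈ R, f a' a b' b v w :=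
        Finset.sum_congr rfl fun w _ => Finset.sum_congr rfl fun a' _ => Finset.sum_comm
    _ = ∑ w : β, ∑ a' ∈ R, ∑ a ∈ R, ∑ b' ∈ R, ∑ v : α, ∑ b ∈ R, f a' a b' b v w :=
        Finset.sum_congr rfl fun w _ => Finset.sum_congr rfl fun a' _ =>
          Finset.sum_congr rfl fun a _ => Finset.sum_comm
    _ = ∑ w : β, ∑ a' ∈ R, ∑ a ∈ R, ∑ b' ∈ R, ∑ b ∈ R, ∑ v : α, f a' a b' b v w :=
        Finset.sum_congr rfl fun w _ => Finset.sum_congr rfl fun a' _ =>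
          Finset.sum_congr rfl fun a _ => Finset.sum_congr rfl fun b' _ => Finset.sum_comm
    _ = ∑ a' ∈ R, ∑ w : β, ∑ a ∈ R, ∑ b' ∈ R, ∑ b ∈ R, ∑ v : α, f a' a b' b v w :=
        Finset.sum_comm
    _ = ∑ a' ∈ R, ∑ a ∈ R, ∑ w : β, ∑ b' ∈ R, ∑ b ∈ R, ∑ v : α, f a' a b' b v w :=
        Finset.sum_congr rfl fun a' _ => Finset.sum_comm
    _ = ∑ a' ∈ R, ∑ a ∈ R, ∑ b' ∈ R, ∑ w : β, ∑ b ∈ R, ∑ v : α, f a' a b' b v w :=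
        Finset.sum_congr rfl fun a' _ => Finset.sum_congr rfl fun a _ => Finset.sum_comm
    _ = ∑ a' ∈ R, ∑ a ∈ R, ∑ b' ∈ R, ∑ b ∈ R, ∑ w : β, ∑ v : α, f a' a b' b v w :=
        Finset.sum_congr rfl fun a' _ => Finset.sum_congr rfl fun a _ =>
          Finset.sum_congr rfl fun b' _ => Finset.sum_comm
    _ = ∑ a' ∈ R, ∑ b' ∈ R, ∑ a ∈ R, ∑ b ∈ R, ∑ w : β, ∑ v : α, f a' a b' b v w :=
        Finset.sum_congr rfl fun a' _ => Finset.sum_comm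
/-- Value part of the Udec summand. -/
def Uval (d n : ℕ) [NeZero d] (l : Fin n) (t : Fin n → ZMod d) (a' b' : ℕ)
    (t' : Fin n → ZMod d) : ℂ :=
  φcoef d n a' b' * τ d ^ (((n:ℤ) - 1) * ((a' : ℤ) * (b' : ℤ))) * (1/(d:ℂ)) *
    ω d ^ (-((b' : ℤ) * ((t l).val : ℤ))) * ω d ^ ((b' : ℤ) * ((t' l).val : ℤ)) *
    ∏ i ∈ Finset.univ.erase l, ω d ^ (((t i).val : ℤ) * (b' : ℤ))

def UIfv (d n : ℕ) [NeZero d] (l : Fin n) (s t : Fin n → ZMod d) (a' b' : ℕ)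
    (v : ZMod d) (t' : Fin n → ZMod d) : ℂ :=
  if ((a' : ℕ) : ZMod d) = t l - s l ∧ v = t' l - ((a' : ℕ) : ZMod d) ∧
      (∀ i, i ≠ l → t' i = t i + ((a' : ℕ) : ZMod d)) then
    Uval d n l t a' b' t'
  else 0

def UIf2v (d n : ℕ) [NeZero d] (l : Fin n) (s t : Fin n → ZMod d) (a' b' : ℕ)
    (t' : Fin n → ZMod d) : ℂ :=
  if ((a' : ℕ) : ZMod d) = t l - s l ∧ (∀ i, i ≠ l → t' i = t i + ((a' : ℕ) : ZMod d)) then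
    Uval d n l t a' b' t'
  else 0

def EIfv (d n : ℕ) [NeZero d] (ψ : ZMod d → ℂ) (k : ZMod d) (u : Fin n → ZMod d)
    (a b : ℕ) (t' : Fin n → ZMod d) : ℂ :=
  if ∀ i, t' i = u i + ((a : ℕ) : ZMod d) then encA d n ψ k u a b else 0

/-- x-independent collected value. -/
def Kval (d n : ℕ) [NeZero d] (ψ : ZMod d → ℂ) (l : Fin n) (k : ZMod d)
    (s t : Fin n → ZMod d) (a' b' a b : ℕ) : ℂ :=
  φcoef d n a' b' * τ d ^ (((n:ℤ) - 1) * ((a' : ℤ) * (b' : ℤ))) * (1/(d:ℂ)) *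
    ω d ^ (-((b' : ℤ) * ((t l).val : ℤ))) *
    (∏ i ∈ Finset.univ.erase l, ω d ^ (((t i).val : ℤ) * (b' : ℤ))) *
    ((φcoef d n a b)⁻¹ *
      (τ d ^ ((a:ℤ) * (b:ℤ)) * ω d ^ (((k - ((a:ℕ):ZMod d)).val : ℤ) * (b:ℤ))) *
      (τ d ^ (-((n:ℤ) * ((a:ℤ) * (b:ℤ)))) *
        ∏ i ∈ Finset.univ.erase l, ω d ^ (-(((s i).val : ℤ) * (b:ℤ)))) *
      ψ (k - ((a:ℕ) : ZMod d)))

lemma stepL1 (n : ℕ) (ψ : ZMod d → ℂ) (l : Fin n) (k : ZMod d) (s t : Fin n → ZMod d)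
    (a' b' a b : ℕ) (t' : Fin n → ZMod d) :
    ∑ v : ZMod d, UIfv d n l s t a' b' v t' * EIfv d n ψ k (Function.update s l v) a b t'
      = UIf2v d n l s t a' b' t' *
          EIfv d n ψ k (Function.update s l (t' l - ((a':ℕ):ZMod d))) a b t' := by
  rw [Finset.sum_eq_single (t' l - ((a':ℕ):ZMod d))]
  · congr 1
    rw [UIfv, UIf2v]
    by_cases h : ((a' : ℕ) : ZMod d) = t l - s l ∧
        (∀ i, i ≠ l → t' i = t i + ((a' : ℕ) : ZMod d))
    · rw [if_pos ⟨h.1, rfl, h.2⟩, if_pos h]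
    · rw [if_neg (fun hc => h ⟨hc.1, hc.2.2⟩), if_neg h]
  · intro v _ hv
    rw [UIfv, if_neg (fun hc => hv hc.2.1), zero_mul]
  · intro h; exact absurd (Finset.mem_univ _) h

lemma stepL2 (n : ℕ) (ψ : ZMod d → ℂ) (l : Fin n) (k : ZMod d) (s t : Fin n → ZMod d)
    (a' b' a b : ℕ) :
    ∑ t' : Fin n → ZMod d, UIf2v d n l s t a' b' t' *
        EIfv d n ψ k (Function.update s l (t' l - ((a':ℕ):ZMod d))) a b t'
      = ∑ x : ZMod d,
          UIf2v d n l s t a' b' (Function.update (fun i => t i + ((a':ℕ):ZMod d)) l x) *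
          EIfv d n ψ k
            (Function.update s l
              (Function.update (fun i => t i + ((a':ℕ):ZMod d)) l x l - ((a':ℕ):ZMod d))) a b
            (Function.update (fun i => t i + ((a':ℕ):ZMod d)) l x) := by
  exact sum_pi_split d l (fun i => t i + ((a':ℕ):ZMod d))
    (fun t' => UIf2v d n l s t a' b' t' *
      EIfv d n ψ k (Function.update s l (t' l - ((a':ℕ):ZMod d))) a b t')
    (fun t' h => by
      obtain ⟨i, hi, hne⟩ := h
      show UIf2v d n l s t a' b' t' *
        EIfv d n ψ k (Function.update s l (t' l - ((a':ℕ):ZMod d))) a b t' = 0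
      rw [UIf2v, if_neg (fun hc => hne (hc.2 i hi)), zero_mul])
lemma stepL3 (n : ℕ) (ψ : ZMod d → ℂ) (l : Fin n) (k : ZMod d) (s t : Fin n → ZMod d)
    (a' b' a b : ℕ) (x : ZMod d) :
    UIf2v d n l s t a' b' (Function.update (fun i => t i + ((a':ℕ):ZMod d)) l x) *
      EIfv d n ψ k
        (Function.update s l
          (Function.update (fun i => t i + ((a':ℕ):ZMod d)) l x l - ((a':ℕ):ZMod d))) a b
        (Function.update (fun i => t i + ((a':ℕ):ZMod d)) l x)
      = (if ((a':ℕ):ZMod d) = t l - s l ∧ ((a:ℕ):ZMod d) = ((a':ℕ):ZMod d) ∧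
            (∀ i, i ≠ l → t i + ((a':ℕ):ZMod d) = s i + ((a:ℕ):ZMod d)) then
          Kval d n ψ l k s t a' b' a b
        else 0)
        * (ω d ^ ((b':ℤ) * ((x.val:ℤ))) * ω d ^ (((a':ℤ) - (x.val:ℤ)) * (b:ℤ))) := by
  have hTl : Function.update (fun i => t i + ((a':ℕ):ZMod d)) l x l = x := by
    simp
  rw [hTl, UIf2v, EIfv]
  have hc3 : ∀ i, i ≠ l → Function.update (fun i => t i + ((a':ℕ):ZMod d)) l x i
      = t i + ((a':ℕ):ZMod d) := fun i hi => Function.update_of_ne hi _ _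
  have hcondE : (∀ i, Function.update (fun i => t i + ((a':ℕ):ZMod d)) l x i
        = Function.update s l (x - ((a':ℕ):ZMod d)) i + ((a:ℕ):ZMod d))
      ↔ (((a:ℕ):ZMod d) = ((a':ℕ):ZMod d) ∧
          (∀ i, i ≠ l → t i + ((a':ℕ):ZMod d) = s i + ((a:ℕ):ZMod d))) := by
    constructor
    · intro h
      constructor
      · have hl := h l
        rw [Function.update_self, Function.update_self] at hl
        have he : x - ((a':ℕ):ZMod d) + ((a:ℕ):ZMod d)
            = x + (((a:ℕ):ZMod d) - ((a':ℕ):ZMod d)) := by ring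
        rw [he, left_eq_add, sub_eq_zero] at hl
        exact hl
      · intro i hi
        have hl := h i
        rw [Function.update_of_ne hi, Function.update_of_ne hi] at hl
        exact hl
    · rintro ⟨ha, hoff⟩ i
      by_cases hi : i = l
      · subst hi
        rw [Function.update_self, Function.update_self, ha]
        ring
      · rw [Function.update_of_ne hi, Function.update_of_ne hi]
        exact hoff i hi
  by_cases h1 : ((a':ℕ):ZMod d) = t l - s l
  · by_cases h2 : ((a:ℕ):ZMod d) = ((a':ℕ):ZMod d) ∧
        (∀ i, i ≠ l → t i + ((a':ℕ):ZMod d) = s i + ((a:ℕ):ZMod d))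
    · rw [if_pos ⟨h1, hc3⟩, if_pos (hcondE.mpr h2), if_pos ⟨h1, h2.1, h2.2⟩]
      rw [Uval, encA, hTl]
      rw [← Finset.mul_prod_erase Finset.univ _ (Finset.mem_univ l)]
      rw [Function.update_self]
      have hprod : (∏ i ∈ Finset.univ.erase l,
            ω d ^ (-(((Function.update s l (x - ((a':ℕ):ZMod d)) i).val : ℤ) * (b:ℤ))))
          = ∏ i ∈ Finset.univ.erase l, ω d ^ (-(((s i).val : ℤ) * (b:ℤ))) :=
        Finset.prod_congr rfl fun i hi => by
          rw [Function.update_of_ne (Finset.mem_erase.mp hi).1]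
      rw [hprod]
      have hx : ω d ^ (-(((x - ((a':ℕ):ZMod d)).val : ℤ) * (b:ℤ)))
          = ω d ^ (((a':ℤ) - (x.val:ℤ)) * (b:ℤ)) := by
        apply omega_zpow_congr
        push_cast
        rw [ZMod.natCast_rightInverse (x - ((a':ℕ):ZMod d)),
          ZMod.natCast_rightInverse x]
        ring
      rw [hx, Kval]
      ring
    · rw [if_neg (fun hc => h2 (hcondE.mp hc)), mul_zero,
        if_neg (fun hc => h2 ⟨hc.2.1, hc.2.2⟩), zero_mul]
  · rw [if_neg (fun hc => h1 hc.1), zero_mul, if_neg (fun hc => h1 hc.1), zero_mul]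
lemma stepL4 (n : ℕ) (ψ : ZMod d → ℂ) (l : Fin n) (k : ZMod d) (s t : Fin n → ZMod d)
    (a' b' a b : ℕ) :
    (∑ t' : Fin n → ZMod d, ∑ v : ZMod d,
        UIfv d n l s t a' b' v t' * EIfv d n ψ k (Function.update s l v) a b t')
      = if ((b:ℕ):ZMod d) = ((b':ℕ):ZMod d) then
          (if ((a:ℕ):ZMod d) = ((a':ℕ):ZMod d) then
            (if ((a':ℕ):ZMod d) = t l - s l ∧
                (∀ i, i ≠ l → t i + ((a':ℕ):ZMod d) = s i + ((a:ℕ):ZMod d)) then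
              Kval d n ψ l k s t a' b' a b * ω d ^ ((a':ℤ) * (b:ℤ)) * (d:ℂ)
            else 0)
          else 0)
        else 0 := by
  rw [Finset.sum_congr rfl (fun t' _ => stepL1 d n ψ l k s t a' b' a b t'), stepL2,
    Finset.sum_congr rfl (fun x _ => stepL3 d n ψ l k s t a' b' a b x)]
  have hsplit : ∀ x : ZMod d,
      ω d ^ ((b':ℤ) * ((x.val:ℤ))) * ω d ^ (((a':ℤ) - (x.val:ℤ)) * (b:ℤ))
        = ω d ^ ((x.val:ℤ) * ((b':ℤ) - (b:ℤ))) * ω d ^ ((a':ℤ) * (b:ℤ)) := by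
    intro x
    rw [← zpow_add₀ (omega_ne_zero d), ← zpow_add₀ (omega_ne_zero d)]
    congr 1
    ring
  have hper : ∀ x : ZMod d,
      (if ((a':ℕ):ZMod d) = t l - s l ∧ ((a:ℕ):ZMod d) = ((a':ℕ):ZMod d) ∧
          (∀ i, i ≠ l → t i + ((a':ℕ):ZMod d) = s i + ((a:ℕ):ZMod d)) then
        Kval d n ψ l k s t a' b' a b else 0)
        * (ω d ^ ((b':ℤ) * ((x.val:ℤ))) * ω d ^ (((a':ℤ) - (x.val:ℤ)) * (b:ℤ)))
      = ((if ((a':ℕ):ZMod d) = t l - s l ∧ ((a:ℕ):ZMod d) = ((a':ℕ):ZMod d) ∧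
          (∀ i, i ≠ l → t i + ((a':ℕ):ZMod d) = s i + ((a:ℕ):ZMod d)) then
        Kval d n ψ l k s t a' b' a b * ω d ^ ((a':ℤ) * (b:ℤ)) else 0))
        * ω d ^ ((x.val:ℤ) * ((b':ℤ) - (b:ℤ))) := by
    intro x
    by_cases hC : ((a':ℕ):ZMod d) = t l - s l ∧ ((a:ℕ):ZMod d) = ((a':ℕ):ZMod d) ∧
        (∀ i, i ≠ l → t i + ((a':ℕ):ZMod d) = s i + ((a:ℕ):ZMod d))
    · rw [if_pos hC, if_pos hC, hsplit x]
      ring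
    · rw [if_neg hC, if_neg hC, zero_mul, zero_mul]
  rw [Finset.sum_congr rfl (fun x _ => hper x), ← Finset.mul_sum, sum_zmod_omega]
  have hbiff : ((((b':ℤ) - (b:ℤ) : ℤ)) : ZMod d) = 0 ↔ (((b:ℕ):ZMod d) = ((b':ℕ):ZMod d)) := by
    rw [Int.cast_sub, sub_eq_zero, Int.cast_natCast, Int.cast_natCast]
    exact eq_comm
  by_cases hb : ((b:ℕ):ZMod d) = ((b':ℕ):ZMod d)
  · rw [if_pos (hbiff.mpr hb), if_pos hb]
    by_cases hC : ((a':ℕ):ZMod d) = t l - s l ∧ ((a:ℕ):ZMod d) = ((a':ℕ):ZMod d) ∧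
        (∀ i, i ≠ l → t i + ((a':ℕ):ZMod d) = s i + ((a:ℕ):ZMod d))
    · rw [if_pos hC, if_pos hC.2.1, if_pos ⟨hC.1, hC.2.2⟩]
    · rw [if_neg hC, zero_mul]
      by_cases ha : ((a:ℕ):ZMod d) = ((a':ℕ):ZMod d)
      · rw [if_pos ha, if_neg (fun hc => hC ⟨hc.1, ha, hc.2⟩)]
      · rw [if_neg ha]
  · rw [if_neg (fun h => hb (hbiff.mp h)), if_neg hb, mul_zero]
lemma stepL56 (n : ℕ) (ψ : ZMod d → ℂ) (l : Fin n) (k : ZMod d) (s t : Fin n → ZMod d)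
    (a' b' : ℕ) (ha' : a' < d) (hb' : b' < d) :
    (∑ a ∈ Finset.range d, ∑ b ∈ Finset.range d,
        (if ((b:ℕ):ZMod d) = ((b':ℕ):ZMod d) then
          (if ((a:ℕ):ZMod d) = ((a':ℕ):ZMod d) then
            (if ((a':ℕ):ZMod d) = t l - s l ∧
                (∀ i, i ≠ l → t i + ((a':ℕ):ZMod d) = s i + ((a:ℕ):ZMod d)) then
              Kval d n ψ l k s t a' b' a b * ω d ^ ((a':ℤ) * (b:ℤ)) * (d:ℂ)
            else 0)
          else 0)
        else 0))
      = if ((a':ℕ):ZMod d) = t l - s l ∧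
            (∀ i, i ≠ l → t i + ((a':ℕ):ZMod d) = s i + ((a':ℕ):ZMod d)) then
          Kval d n ψ l k s t a' b' a' b' * ω d ^ ((a':ℤ) * (b':ℤ)) * (d:ℂ)
        else 0 := by
  have hinner : ∀ a : ℕ,
      (∑ b ∈ Finset.range d,
        (if ((b:ℕ):ZMod d) = ((b':ℕ):ZMod d) then
          (if ((a:ℕ):ZMod d) = ((a':ℕ):ZMod d) then
            (if ((a':ℕ):ZMod d) = t l - s l ∧
                (∀ i, i ≠ l → t i + ((a':ℕ):ZMod d) = s i + ((a:ℕ):ZMod d)) then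
              Kval d n ψ l k s t a' b' a b * ω d ^ ((a':ℤ) * (b:ℤ)) * (d:ℂ)
            else 0)
          else 0)
        else 0))
      = (if ((a:ℕ):ZMod d) = ((a':ℕ):ZMod d) then
          (if ((a':ℕ):ZMod d) = t l - s l ∧
              (∀ i, i ≠ l → t i + ((a':ℕ):ZMod d) = s i + ((a:ℕ):ZMod d)) then
            Kval d n ψ l k s t a' b' a b' * ω d ^ ((a':ℤ) * (b':ℤ)) * (d:ℂ)
          else 0)
        else 0) := fun a => sum_range_pick' d hb' _
  rw [Finset.sum_congr rfl (fun a _ => hinner a)]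
  exact sum_range_pick' d ha' _

lemma stepL7 (n : ℕ) (ψ : ZMod d → ℂ) (l : Fin n) (k : ZMod d) (s t : Fin n → ZMod d)
    (a' : ℕ) :
    ∑ b' ∈ Finset.range d,
        (if ((a':ℕ):ZMod d) = t l - s l ∧
            (∀ i, i ≠ l → t i + ((a':ℕ):ZMod d) = s i + ((a':ℕ):ZMod d)) then
          Kval d n ψ l k s t a' b' a' b' * ω d ^ ((a':ℤ) * (b':ℤ)) * (d:ℂ)
        else 0)
      = if ((a':ℕ):ZMod d) = t l - s l then
          (if (∀ i, i ≠ l → t i = s i) then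
            ψ (k - ((a':ℕ):ZMod d)) * (if t l = k then (d:ℂ) else 0)
          else 0)
        else 0 := by
  by_cases h1 : ((a':ℕ):ZMod d) = t l - s l
  · rw [if_pos h1]
    by_cases hEq : ∀ i, i ≠ l → t i = s i
    · rw [if_pos hEq]
      have hval : ∀ b' : ℕ,
          Kval d n ψ l k s t a' b' a' b' * ω d ^ ((a':ℤ) * (b':ℤ)) * (d:ℂ)
            = ψ (k - ((a':ℕ):ZMod d)) *
              ω d ^ ((b':ℤ) * ((((k - ((a':ℕ):ZMod d)).val : ℤ)) + (a':ℤ) - ((t l).val : ℤ))) := by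
        intro b'
        have hφ : φcoef d n a' b' * (φcoef d n a' b')⁻¹ = 1 :=
          mul_inv_cancel₀ (φcoef_ne_zero d n a' b')
        have hτ : τ d ^ (((n:ℤ) - 1) * ((a':ℤ) * (b':ℤ))) * τ d ^ ((a':ℤ) * (b':ℤ)) *
            τ d ^ (-((n:ℤ) * ((a':ℤ) * (b':ℤ)))) = 1 := by
          rw [← zpow_add₀ (tau_ne_zero d), ← zpow_add₀ (tau_ne_zero d),
            show ((n:ℤ) - 1) * ((a':ℤ) * (b':ℤ)) + (a':ℤ) * (b':ℤ)
              + -((n:ℤ) * ((a':ℤ) * (b':ℤ))) = 0 by ring, zpow_zero]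
        have hprod : (∏ i ∈ Finset.univ.erase l, ω d ^ (((t i).val : ℤ) * (b':ℤ))) *
            (∏ i ∈ Finset.univ.erase l, ω d ^ (-(((s i).val : ℤ) * (b':ℤ)))) = 1 := by
          rw [← Finset.prod_mul_distrib]
          rw [Finset.prod_congr rfl (fun i hi => by
            rw [hEq i (Finset.mem_erase.mp hi).1, ← zpow_add₀ (omega_ne_zero d),
              show (((s i).val : ℤ) * (b':ℤ)) + -(((s i).val : ℤ) * (b':ℤ)) = 0 by ring,
              zpow_zero])]
          rw [Finset.prod_const_one]
        have hω : ω d ^ (-((b':ℤ) * ((t l).val : ℤ))) *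
            ω d ^ (((k - ((a':ℕ):ZMod d)).val : ℤ) * (b':ℤ)) * ω d ^ ((a':ℤ) * (b':ℤ))
              = ω d ^ ((b':ℤ) * ((((k - ((a':ℕ):ZMod d)).val : ℤ)) + (a':ℤ) - ((t l).val : ℤ))) := by
          rw [← zpow_add₀ (omega_ne_zero d), ← zpow_add₀ (omega_ne_zero d)]
          congr 1
          ring
        have hassemble : Kval d n ψ l k s t a' b' a' b' * ω d ^ ((a':ℤ) * (b':ℤ)) * (d:ℂ)
            = (φcoef d n a' b' * (φcoef d n a' b')⁻¹) *
              (τ d ^ (((n:ℤ) - 1) * ((a':ℤ) * (b':ℤ))) * τ d ^ ((a':ℤ) * (b':ℤ)) *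
                τ d ^ (-((n:ℤ) * ((a':ℤ) * (b':ℤ))))) *
              ((∏ i ∈ Finset.univ.erase l, ω d ^ (((t i).val : ℤ) * (b':ℤ))) *
                (∏ i ∈ Finset.univ.erase l, ω d ^ (-(((s i).val : ℤ) * (b':ℤ))))) *
              (ω d ^ (-((b':ℤ) * ((t l).val : ℤ))) *
                ω d ^ (((k - ((a':ℕ):ZMod d)).val : ℤ) * (b':ℤ)) * ω d ^ ((a':ℤ) * (b':ℤ))) *
              ψ (k - ((a':ℕ):ZMod d)) * ((1/(d:ℂ)) * (d:ℂ)) := by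
          rw [Kval]
          ring
        rw [hassemble, hφ, hτ, hprod, hω, one_div_mul_cancel (dC_ne_zero d)]
        ring
      have hcond : ∀ b' : ℕ, (((a':ℕ):ZMod d) = t l - s l ∧
          (∀ i, i ≠ l → t i + ((a':ℕ):ZMod d) = s i + ((a':ℕ):ZMod d))) := fun b' =>
        ⟨h1, fun i hi => by rw [hEq i hi]⟩
      rw [Finset.sum_congr rfl (fun b' _ => by rw [if_pos (hcond b'), hval b'])]
      rw [← Finset.mul_sum, sum_omega_zpow]
      have hM : ((((((k - ((a':ℕ):ZMod d)).val : ℤ)) + (a':ℤ) - ((t l).val : ℤ)) : ℤ) : ZMod d)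
          = k - t l := by
        push_cast
        rw [ZMod.natCast_rightInverse (k - ((a':ℕ):ZMod d)),
          ZMod.natCast_rightInverse (t l)]
        ring
      by_cases htl : t l = k
      · rw [if_pos (by rw [hM, htl, sub_self]), if_pos htl]
      · rw [if_neg (fun hc => htl (by
          have := hM ▸ hc
          exact (sub_eq_zero.mp this).symm)), if_neg htl]
    · rw [if_neg hEq]
      exact Finset.sum_eq_zero fun b' _ =>
        if_neg (fun hc => hEq (fun i hi => add_right_cancel (hc.2 i hi)))
  · rw [if_neg h1]
    exact Finset.sum_eq_zero fun b' _ => if_neg (fun hc => h1 hc.1)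
lemma Psiout_apply (n : ℕ) (hn : 0 < n) (ψ : ZMod d → ℂ) (l : Fin n) (k : ZMod d)
    (s t : Fin n → ZMod d) :
    Ψout d n ψ l (k, s, t)
      = if t l = k ∧ (∀ i, i ≠ l → t i = s i) then
          ψ (s l) * (((d:ℝ) ^ (-(n:ℝ)/2) : ℝ) : ℂ) else 0 := by
  have hA : ∀ (v : ZMod d) (t' : Fin n → ZMod d),
      Udec d n l (s l, t) (v, t') * Ψenc d n ψ (k, Function.update s l v, t')
        = (((d:ℝ) ^ (-(n:ℝ)/2) : ℝ) : ℂ) / d *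
          ∑ a' ∈ Finset.range d, ∑ a ∈ Finset.range d, ∑ b' ∈ Finset.range d,
            ∑ b ∈ Finset.range d,
            UIfv d n l s t a' b' v t' * EIfv d n ψ k (Function.update s l v) a b t' := by
    intro v t'
    rw [Udec_apply d n hn l (s l) v t t', Psienc_apply d n ψ k (Function.update s l v) t',
      mul_left_comm]
    congr 1
    rw [Finset.sum_mul_sum]
    refine Finset.sum_congr rfl fun a' _ => ?_
    refine Finset.sum_congr rfl fun a _ => ?_
    rw [Finset.sum_mul_sum]
    rfl
  rw [show Ψout d n ψ l (k, s, t) = ∑ v : ZMod d, ∑ t' : Fin n → ZMod d,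
      Udec d n l (s l, t) (v, t') * Ψenc d n ψ (k, Function.update s l v, t') from rfl]
  calc (∑ v : ZMod d, ∑ t' : Fin n → ZMod d,
          Udec d n l (s l, t) (v, t') * Ψenc d n ψ (k, Function.update s l v, t'))
      = ∑ v : ZMod d, ∑ t' : Fin n → ZMod d, (((d:ℝ) ^ (-(n:ℝ)/2) : ℝ) : ℂ) / d *
          ∑ a' ∈ Finset.range d, ∑ a ∈ Finset.range d, ∑ b' ∈ Finset.range d,
            ∑ b ∈ Finset.range d,
            UIfv d n l s t a' b' v t' * EIfv d n ψ k (Function.update s l v) a b t' :=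
        Finset.sum_congr rfl fun v _ => Finset.sum_congr rfl fun t' _ => hA v t'
    _ = (((d:ℝ) ^ (-(n:ℝ)/2) : ℝ) : ℂ) / d * ∑ v : ZMod d, ∑ t' : Fin n → ZMod d,
          ∑ a' ∈ Finset.range d, ∑ a ∈ Finset.range d, ∑ b' ∈ Finset.range d,
            ∑ b ∈ Finset.range d,
            UIfv d n l s t a' b' v t' * EIfv d n ψ k (Function.update s l v) a b t' := by
        rw [Finset.mul_sum]
        exact Finset.sum_congr rfl fun v _ => (Finset.mul_sum _ _ _).symm
    _ = (((d:ℝ) ^ (-(n:ℝ)/2) : ℝ) : ℂ) / d *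
          ∑ a' ∈ Finset.range d, ∑ b' ∈ Finset.range d, ∑ a ∈ Finset.range d,
            ∑ b ∈ Finset.range d, ∑ t' : Fin n → ZMod d, ∑ v : ZMod d,
            UIfv d n l s t a' b' v t' * EIfv d n ψ k (Function.update s l v) a b t' := by
        rw [sum_reorder]
    _ = (((d:ℝ) ^ (-(n:ℝ)/2) : ℝ) : ℂ) / d *
          ∑ a' ∈ Finset.range d, ∑ b' ∈ Finset.range d,
            (if ((a':ℕ):ZMod d) = t l - s l ∧
                (∀ i, i ≠ l → t i + ((a':ℕ):ZMod d) = s i + ((a':ℕ):ZMod d)) then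
              Kval d n ψ l k s t a' b' a' b' * ω d ^ ((a':ℤ) * (b':ℤ)) * (d:ℂ)
            else 0) := by
        congr 1
        refine Finset.sum_congr rfl fun a' ha' => ?_
        refine Finset.sum_congr rfl fun b' hb' => ?_
        rw [Finset.sum_congr rfl (fun a _ => Finset.sum_congr rfl
          (fun b _ => stepL4 d n ψ l k s t a' b' a b))]
        exact stepL56 d n ψ l k s t a' b' (Finset.mem_range.mp ha') (Finset.mem_range.mp hb')
    _ = (((d:ℝ) ^ (-(n:ℝ)/2) : ℝ) : ℂ) / d *
          ∑ a' ∈ Finset.range d,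
            (if ((a':ℕ):ZMod d) = t l - s l then
              (if (∀ i, i ≠ l → t i = s i) then
                ψ (k - ((a':ℕ):ZMod d)) * (if t l = k then (d:ℂ) else 0)
              else 0)
            else 0) := by
        congr 1
        exact Finset.sum_congr rfl fun a' _ => stepL7 d n ψ l k s t a'
    _ = (((d:ℝ) ^ (-(n:ℝ)/2) : ℝ) : ℂ) / d *
          (if (∀ i, i ≠ l → t i = s i) then
            ψ (k - (t l - s l)) * (if t l = k then (d:ℂ) else 0)
          else 0) := by
        rw [sum_range_pick d (t l - s l), ZMod.natCast_rightInverse (t l - s l)]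
    _ = if t l = k ∧ (∀ i, i ≠ l → t i = s i) then
          ψ (s l) * (((d:ℝ) ^ (-(n:ℝ)/2) : ℝ) : ℂ) else 0 := by
        by_cases hEq : ∀ i, i ≠ l → t i = s i
        · by_cases htl : t l = k
          · rw [if_pos hEq, if_pos htl, if_pos ⟨htl, hEq⟩, htl, sub_sub_cancel]
            have hd := dC_ne_zero d
            field_simp
          · rw [if_pos hEq, if_neg htl, if_neg (fun hc => htl hc.1), mul_zero, mul_zero]
        · rw [if_neg hEq, if_neg (fun hc => hEq hc.2), mul_zero]

lemma sum_pi_eval {n : ℕ} (l : Fin n) (G : ZMod d → ℂ) :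
    ∑ t : Fin n → ZMod d, G (t l) = (d ^ (n-1) : ℕ) • ∑ x : ZMod d, G x := by
  rw [← Equiv.sum_comp (Equiv.piSplitAt l (fun _ => ZMod d)).symm (fun t => G (t l)),
    Fintype.sum_prod_type]
  have hcard : Fintype.card ({j : Fin n // j ≠ l} → ZMod d) = d ^ (n - 1) := by
    rw [Fintype.card_fun, ZMod.card]
    congr 1
    rw [Fintype.card_subtype_compl, Fintype.card_fin, Fintype.card_subtype_eq]
  calc (∑ x : ZMod d, ∑ g : {j : Fin n // j ≠ l} → ZMod d,
          G ((Equiv.piSplitAt l (fun _ => ZMod d)).symm (x, g) l))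
      = ∑ x : ZMod d, ∑ _g : {j : Fin n // j ≠ l} → ZMod d, G x :=
        Finset.sum_congr rfl fun x _ => Finset.sum_congr rfl fun g _ => by
          rw [piSplit_symm_at]
    _ = ∑ x : ZMod d, (d ^ (n-1) : ℕ) • G x := Finset.sum_congr rfl fun x _ => by
          rw [Finset.sum_const, Finset.card_univ, hcard]
    _ = (d ^ (n-1) : ℕ) • ∑ x : ZMod d, G x := (Finset.smul_sum).symm

/-- decryption recovers the input state on the chosen signal
register `S_l`. -/
theorem decryption_recovers_input (d n : ℕ) [NeZero d] (hd : 2 ≤ d) (hn : 2 ≤ n)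
    (ψ : ZMod d → ℂ) (hψ : ∑ k, ‖ψ k‖ ^ 2 = 1) (l : Fin n) :
    (Matrix.of fun u u' : ZMod d =>
        ∑ k : ZMod d, ∑ t : Fin n → ZMod d,
        ∑ g : {i : Fin n // i ≠ l} → ZMod d,
          Ψout d n ψ l (k, insVal l u g, t) *
            (starRingEnd ℂ) (Ψout d n ψ l (k, insVal l u' g, t)))
      = Matrix.of fun u u' : ZMod d => ψ u * (starRingEnd ℂ) (ψ u') := by
  have hn0 : 0 < n := lt_of_lt_of_le two_pos hn
  have hdpos : (0:ℝ) < d := by exact_mod_cast Nat.pos_of_ne_zero (NeZero.ne d)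
  have hnum : (d : ℂ) * ((d : ℂ) ^ (n-1)) *
      ((((d:ℝ) ^ (-(n:ℝ)/2) : ℝ) : ℂ) * (((d:ℝ) ^ (-(n:ℝ)/2) : ℝ) : ℂ)) = 1 := by
    rw [← Complex.ofReal_mul, ← Real.rpow_add hdpos,
      show (-(n:ℝ)/2 + -(n:ℝ)/2) = -(n:ℝ) by ring,
      show ((d:ℝ) ^ (-(n:ℝ))) = (((d:ℝ))^(n:ℕ))⁻¹ by
        rw [Real.rpow_neg hdpos.le, Real.rpow_natCast],
      Complex.ofReal_inv, Complex.ofReal_pow, Complex.ofReal_natCast]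
    have h2 : ((d:ℂ))^n = (d:ℂ) * (d:ℂ)^(n-1) := by
      conv_lhs => rw [show n = 1 + (n-1) by omega]
      rw [pow_add, pow_one]
    rw [h2]
    exact mul_inv_cancel₀ (mul_ne_zero (dC_ne_zero d) (pow_ne_zero _ (dC_ne_zero d)))
  ext u u'
  simp only [Matrix.of_apply]
  have hterm : ∀ (w : ZMod d) (k : ZMod d) (t : Fin n → ZMod d)
      (g : {i : Fin n // i ≠ l} → ZMod d),
      Ψout d n ψ l (k, insVal l w g, t)
        = if (t l = k ∧ ∀ i : {i : Fin n // i ≠ l}, t (i:Fin n) = g i) then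
            ψ w * (((d:ℝ) ^ (-(n:ℝ)/2) : ℝ) : ℂ) else 0 := by
    intro w k t g
    rw [Psiout_apply d n hn0 ψ l k (insVal l w g) t]
    have h1 : insVal l w g l = w := dif_pos rfl
    have h2 : ∀ (i : Fin n) (hi : i ≠ l), insVal l w g i = g ⟨i, hi⟩ := fun i hi => dif_neg hi
    by_cases hc : ∀ i : {i : Fin n // i ≠ l}, t (i:Fin n) = g i
    · by_cases htl : t l = k
      · rw [if_pos ⟨htl, fun i hi => by rw [h2 i hi]; exact hc ⟨i, hi⟩⟩, if_pos ⟨htl, hc⟩, h1]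
      · rw [if_neg (fun h => htl h.1), if_neg (fun h => htl h.1)]
    · rw [if_neg (fun h => hc (fun i => (h.2 i i.2).trans (h2 i i.2))),
        if_neg (fun h => hc h.2)]
  have hpair : ∀ (k : ZMod d) (t : Fin n → ZMod d) (g : {i : Fin n // i ≠ l} → ZMod d),
      Ψout d n ψ l (k, insVal l u g, t) *
          (starRingEnd ℂ) (Ψout d n ψ l (k, insVal l u' g, t))
        = if (t l = k ∧ ∀ i : {i : Fin n // i ≠ l}, t (i:Fin n) = g i) then
            (ψ u * (((d:ℝ) ^ (-(n:ℝ)/2) : ℝ) : ℂ)) *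
              (starRingEnd ℂ) (ψ u' * (((d:ℝ) ^ (-(n:ℝ)/2) : ℝ) : ℂ))
          else 0 := by
    intro k t g
    rw [hterm u, hterm u']
    by_cases hc : (t l = k ∧ ∀ i : {i : Fin n // i ≠ l}, t (i:Fin n) = g i)
    · rw [if_pos hc, if_pos hc, if_pos hc]
    · rw [if_neg hc, if_neg hc, if_neg hc, zero_mul]
  have hg : ∀ (k : ZMod d) (t : Fin n → ZMod d),
      (∑ g : {i : Fin n // i ≠ l} → ZMod d,
        (if (t l = k ∧ ∀ i : {i : Fin n // i ≠ l}, t (i:Fin n) = g i) then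
            (ψ u * (((d:ℝ) ^ (-(n:ℝ)/2) : ℝ) : ℂ)) *
              (starRingEnd ℂ) (ψ u' * (((d:ℝ) ^ (-(n:ℝ)/2) : ℝ) : ℂ))
          else 0))
      = if t l = k then (ψ u * (((d:ℝ) ^ (-(n:ℝ)/2) : ℝ) : ℂ)) *
              (starRingEnd ℂ) (ψ u' * (((d:ℝ) ^ (-(n:ℝ)/2) : ℝ) : ℂ)) else 0 := by
    intro k t
    rw [Finset.sum_eq_single (fun j : {i : Fin n // i ≠ l} => t (j:Fin n))]
    · by_cases htl : t l = k
      · rw [if_pos ⟨htl, fun i => rfl⟩, if_pos htl]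
      · rw [if_neg (fun h => htl h.1), if_neg htl]
    · intro g _ hgne
      rw [if_neg (fun h => hgne (funext fun j => (h.2 j).symm))]
    · intro h; exact absurd (Finset.mem_univ _) h
  calc (∑ k : ZMod d, ∑ t : Fin n → ZMod d, ∑ g : {i : Fin n // i ≠ l} → ZMod d,
          Ψout d n ψ l (k, insVal l u g, t) *
            (starRingEnd ℂ) (Ψout d n ψ l (k, insVal l u' g, t)))
      = ∑ k : ZMod d, ∑ t : Fin n → ZMod d,
          (if t l = k then (ψ u * (((d:ℝ) ^ (-(n:ℝ)/2) : ℝ) : ℂ)) *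
              (starRingEnd ℂ) (ψ u' * (((d:ℝ) ^ (-(n:ℝ)/2) : ℝ) : ℂ)) else 0) :=
        Finset.sum_congr rfl fun k _ => Finset.sum_congr rfl fun t _ => by
          rw [Finset.sum_congr rfl (fun g _ => hpair k t g), hg k t]
    _ = ∑ k : ZMod d, (d ^ (n-1) : ℕ) •
          ((ψ u * (((d:ℝ) ^ (-(n:ℝ)/2) : ℝ) : ℂ)) *
            (starRingEnd ℂ) (ψ u' * (((d:ℝ) ^ (-(n:ℝ)/2) : ℝ) : ℂ))) :=
        Finset.sum_congr rfl fun k _ => by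
          rw [sum_pi_eval d l (fun x => if x = k then (ψ u * (((d:ℝ) ^ (-(n:ℝ)/2) : ℝ) : ℂ)) *
              (starRingEnd ℂ) (ψ u' * (((d:ℝ) ^ (-(n:ℝ)/2) : ℝ) : ℂ)) else 0),
            Finset.sum_ite_eq' Finset.univ k, if_pos (Finset.mem_univ k)]
    _ = (d : ℕ) • ((d ^ (n-1) : ℕ) •
          ((ψ u * (((d:ℝ) ^ (-(n:ℝ)/2) : ℝ) : ℂ)) *
            (starRingEnd ℂ) (ψ u' * (((d:ℝ) ^ (-(n:ℝ)/2) : ℝ) : ℂ)))) := by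
        rw [Finset.sum_const, Finset.card_univ, ZMod.card]
    _ = ψ u * (starRingEnd ℂ) (ψ u') := by
        rw [nsmul_eq_mul, nsmul_eq_mul, _root_.map_mul, Complex.conj_ofReal]
        push_cast
        linear_combination (ψ u * (starRingEnd ℂ) (ψ u')) * hnum


end
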